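/- Suppose w : [0,∞)×ℝ → (0,∞) is a classical solution of the Burgers equation w_t + w w_x = 0, λ is a smooth strictly monotone function with smooth inverse, and define V(t,x) by λ(V(t,x)) = w(t,x), and U(t,x) = ū − ∫_{v̄}^{V(t,x)} λ(s) ds, where λ(v) = √(−p'(v)). Then (V,U) is a classical solution of the p-system V_t = U_x, U_t + p(V)_x = 0. -/

import Mathlib

/-- From a classical positive Burgers solution w and the characteristic speed
λ(v) = √(−p'(v)) = √(aγ) v^{-(γ+1)/2}, the pair V (with λ(V) = w) and
U = ū − ∫_{v̄}^V λ(s)ds is a classical solution of the p-system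
V_t = U_x, U_t + p(V)_x = 0 with p(v) = a v^{-γ}. -/
theorem psystem_from_burgers (a γ ubar vbar : ℝ) (ha : 0 < a) (hγ : 1 < γ)
    (hvbar : 0 < vbar) (w V U : ℝ → ℝ → ℝ) (lam : ℝ → ℝ)
    (hlam : lam = fun v => Real.sqrt (a * γ) * v ^ (-((γ+1)/2)))
    (hwpos : ∀ t x : ℝ, 0 < w t x)
    (hburgers : ∀ t x : ℝ, ∃ wt wx : ℝ, HasDerivAt (fun s => w s x) wt t ∧
      HasDerivAt (fun y => w t y) wx x ∧ wt + w t x * wx = 0)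
    (hV : ∀ t x : ℝ, 0 < V t x ∧ lam (V t x) = w t x)
    (hU : ∀ t x : ℝ, U t x = ubar - ∫ s in vbar..(V t x), lam s) :
    ∀ t x : ℝ, ∃ Vt Ut Ux Px : ℝ,
      HasDerivAt (fun s => V s x) Vt t ∧ HasDerivAt (fun y => U t y) Ux x ∧ Vt = Ux ∧
      HasDerivAt (fun s => U s x) Ut t ∧
      HasDerivAt (fun y => a * (V t y) ^ (-γ)) Px x ∧ Ut + Px = 0 := by
  intro t x
  set c : ℝ := Real.sqrt (a * γ) with hc
  have hag : (0:ℝ) < a * γ := by positivity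
  have hcpos : 0 < c := Real.sqrt_pos.mpr hag
  have hc2 : c ^ 2 = a * γ := Real.sq_sqrt hag.le
  set p : ℝ := -((γ+1)/2) with hp
  set r : ℝ := -2/(γ+1) with hr
  have hγ1 : (0:ℝ) < γ + 1 := by linarith
  have hpne : p ≠ 0 := by
    simp only [hp]; intro h; nlinarith [neg_eq_zero.mp h]
  -- V as an explicit function of w
  have hVeq : ∀ s y : ℝ, V s y = (w s y / c) ^ r := by
    intro s y
    obtain ⟨hVpos, hlamV⟩ := hV s y
    rw [hlam] at hlamV
    simp only [← hp] at hlamV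
    have h1 : (V s y) ^ p = w s y / c := by
      rw [eq_div_iff hcpos.ne']
      rw [← hlamV]; ring
    have h2 : p * r = 1 := by
      simp only [hp, hr]; field_simp
    calc V s y = (V s y) ^ (p * r) := by rw [h2, Real.rpow_one]
    _ = ((V s y) ^ p) ^ r := Real.rpow_mul hVpos.le p r
    _ = (w s y / c) ^ r := by rw [h1]
  -- derivative of the map y ↦ (y/c)^r at positive points
  have hF : ∀ y : ℝ, 0 < y →
      HasDerivAt (fun z => (z / c) ^ r) (r * (y / c) ^ (r - 1) * (1 / c)) y := by
    intro y hy
    have h1 : HasDerivAt (fun z : ℝ => z ^ r) (r * (y / c) ^ (r - 1)) (y / c) :=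
      Real.hasDerivAt_rpow_const (Or.inl (by positivity))
    have h2 : HasDerivAt (fun z : ℝ => z / c) (1 / c) y := by
      simpa using (hasDerivAt_id y).div_const c
    exact h1.comp y h2
  obtain ⟨wt, wx, hwt, hwx, hbur⟩ := hburgers t x
  set wv : ℝ := w t x with hwv
  have hwvpos : 0 < wv := hwpos t x
  set Dw : ℝ := r * (wv / c) ^ (r - 1) * (1 / c) with hDw
  -- derivatives of V
  have hVt : HasDerivAt (fun s => V s x) (Dw * wt) t := by
    have heq : (fun s => V s x) = fun s => (w s x / c) ^ r := funext fun s => hVeq s x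
    rw [heq]
    exact (hF wv hwvpos).comp t hwt
  have hVx : HasDerivAt (fun y => V t y) (Dw * wx) x := by
    have heq : (fun y => V t y) = fun y => (w t y / c) ^ r := funext fun y => hVeq t y
    rw [heq]
    exact (hF wv hwvpos).comp x hwx
  set v0 : ℝ := V t x with hv0def
  have hv0 : 0 < v0 := (hV t x).1
  have hlamv0 : lam v0 = wv := (hV t x).2
  -- continuity of lam away from 0
  have hlamCont : ∀ y : ℝ, y ≠ 0 → ContinuousAt lam y := by
    intro y hy
    rw [hlam]
    exact continuousAt_const.mul (Real.continuousAt_rpow_const y _ (Or.inl hy))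
  -- FTC derivative of the primitive at v0
  have hG : HasDerivAt (fun u => ∫ s in vbar..u, lam s) (lam v0) v0 := by
    have hInt : IntervalIntegrable lam MeasureTheory.volume vbar v0 := by
      apply ContinuousOn.intervalIntegrable
      intro y hy
      have : 0 < y := lt_of_lt_of_le (lt_min hvbar hv0) hy.1
      exact (hlamCont y this.ne').continuousWithinAt
    have hmeas : StronglyMeasurableAtFilter lam (nhds v0) MeasureTheory.volume := by
      refine ContinuousAt.stronglyMeasurableAtFilter isOpen_Ioi
        (fun y hy => hlamCont y (ne_of_gt hy)) v0 hv0
    exact intervalIntegral.integral_hasDerivAt_right hInt hmeas (hlamCont v0 hv0.ne')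
  -- derivatives of U
  have hUx : HasDerivAt (fun y => U t y) (-(lam v0 * (Dw * wx))) x := by
    have h1 := (hG.comp x hVx).const_sub ubar
    have heq : (fun y => U t y) = fun y => ubar - ∫ s in vbar..(V t y), lam s :=
      funext fun y => hU t y
    rw [heq]
    simpa [Function.comp] using h1
  have hUt : HasDerivAt (fun s => U s x) (-(lam v0 * (Dw * wt))) t := by
    have h1 := (hG.comp t hVt).const_sub ubar
    have heq : (fun s => U s x) = fun s => ubar - ∫ s' in vbar..(V s x), lam s' :=
      funext fun s => hU s x
    rw [heq]
    simpa [Function.comp] using h1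
  -- derivative of the pressure term
  have hPx : HasDerivAt (fun y => a * (V t y) ^ (-γ))
      (a * ((-γ) * v0 ^ (-γ - 1) * (Dw * wx))) x := by
    have h1 : HasDerivAt (fun z : ℝ => z ^ (-γ)) ((-γ) * v0 ^ (-γ - 1)) v0 :=
      Real.hasDerivAt_rpow_const (Or.inl hv0.ne')
    have h2 := (h1.comp x hVx).const_mul a
    simpa [Function.comp, mul_assoc] using h2
  -- key algebraic identity: wv² = aγ v0^{-γ-1}
  have hw2 : wv ^ 2 = a * γ * v0 ^ (-γ - 1) := by
    have h1 : wv = c * v0 ^ p := by rw [← hlamv0, hlam]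
    have h2 : v0 ^ p * v0 ^ p = v0 ^ (-γ - 1) := by
      rw [← Real.rpow_add hv0]
      norm_num [hp]
      ring_nf
    calc wv ^ 2 = c ^ 2 * (v0 ^ p * v0 ^ p) := by rw [h1]; ring
    _ = a * γ * v0 ^ (-γ - 1) := by rw [hc2, h2]
  have hwt' : wt = -(wv * wx) := by linarith
  refine ⟨Dw * wt, -(lam v0 * (Dw * wt)), -(lam v0 * (Dw * wx)),
    a * ((-γ) * v0 ^ (-γ - 1) * (Dw * wx)), hVt, hUx, ?_, hUt, hPx, ?_⟩
  · rw [hlamv0, hwt']; ring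
  · rw [hlamv0, hwt']
    linear_combination (Dw * wx) * hw2
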